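/- Let f : ℝⁿ → ℝ be a nonconstant polynomial. Suppose f is non-degenerate at infinity and there exists R > 0 with f(x) ≥ 0 for all ‖x‖ > R. Then for every face Δ ∈ Γ_∞(f), the face polynomial f_Δ is strictly positive on (ℝ\{0})ⁿ. -/

import Mathlib

open MvPolynomial Set Asymptotics Filter

/-- The exponent vector of a monomial, viewed in `ℝⁿ`. -/
noncomputable def expR {n : ℕ} (α : Fin n →₀ ℕ) : Fin n → ℝ := fun i => (α i : ℝ)

/-- The Newton polyhedron (at infinity) of a polynomial: the convex hull of its exponents. -/
noncomputable def Newton {n : ℕ} (f : MvPolynomial (Fin n) ℝ) : Set (Fin n → ℝ) :=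
  convexHull ℝ (expR '' (f.support : Set (Fin n →₀ ℕ)))

/-- `d(q, Γ(f))`: the minimal value of `⟨q, ·⟩` on the Newton polyhedron. -/
noncomputable def dMin {n : ℕ} (q : Fin n → ℝ) (f : MvPolynomial (Fin n) ℝ) : ℝ :=
  sInf ((fun α : Fin n → ℝ => ∑ i, q i * α i) '' Newton f)

/-- `Δ(q, Γ(f))`: the face of the Newton polyhedron where `⟨q, ·⟩` attains its minimum. -/
noncomputable def face {n : ℕ} (q : Fin n → ℝ) (f : MvPolynomial (Fin n) ℝ) : Set (Fin n → ℝ) :=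
  {α ∈ Newton f | ∑ i, q i * α i = dMin q f}

/-- The Newton boundary at infinity: faces `Δ(q, Γ(f))` with `min_j q_j < 0`. -/
noncomputable def NewtonBoundary {n : ℕ} (f : MvPolynomial (Fin n) ℝ) : Set (Set (Fin n → ℝ)) :=
  {Δ | ∃ q : Fin n → ℝ, (∃ j, q j < 0) ∧ Δ = face q f}

open Classical in
/-- The truncation `f_Δ` of `f` to a face `Δ`. -/
noncomputable def trunc {n : ℕ} (f : MvPolynomial (Fin n) ℝ) (Δ : Set (Fin n → ℝ)) :
    MvPolynomial (Fin n) ℝ :=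
  ∑ α ∈ f.support.filter (fun α => expR α ∈ Δ), monomial α (f.coeff α)

/-- `𝒫(x) = Σ_{α ∈ Γ(f) ∩ ℤ₊ⁿ} |x^α|`. -/
noncomputable def P {n : ℕ} (f : MvPolynomial (Fin n) ℝ) (x : Fin n → ℝ) : ℝ :=
  ∑' α : {α : Fin n →₀ ℕ // expR α ∈ Newton f}, |∏ i, x i ^ ((α : Fin n →₀ ℕ) i)|

/-- Non-degeneracy at infinity. -/
def Nondeg {n : ℕ} (f : MvPolynomial (Fin n) ℝ) : Prop :=
  ∀ Δ ∈ NewtonBoundary f, ¬ ∃ x : Fin n → ℝ, (∀ i, x i ≠ 0) ∧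
    eval x (trunc f Δ) = 0 ∧ ∀ i, eval x (pderiv i (trunc f Δ)) = 0

/-- The norm of a polynomial: the maximum of the absolute values of its coefficients. -/
noncomputable def polyNorm {n : ℕ} (f : MvPolynomial (Fin n) ℝ) : ℝ :=
  ⨆ α ∈ f.support, |f.coeff α|

/-- Stable compactness of the zero set of `f`. -/
def StablyCompact {n : ℕ} (f : MvPolynomial (Fin n) ℝ) : Prop :=
  ∃ ε > 0, ∀ g : MvPolynomial (Fin n) ℝ, Newton g ⊆ Newton f → polyNorm g < ε →
    IsCompact {x : Fin n → ℝ | eval x (f + g) = 0}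

/-!
Along the curve `s ↦ (x₁ s^{-q₁}, …, xₙ s^{-qₙ})` each monomial `x^α` of `f` scales like
`s^{-⟨q, α⟩}`, so `s^{d(q, Γ(f))} f` tends to `f_Δ(x)` as `s → ∞`, where `Δ = Δ(q, Γ(f))`.
When some `q_j < 0` and `x_j ≠ 0` the curve leaves every ball, where `f ≥ 0`; hence `f_Δ ≥ 0`
on the torus `(ℝ \ {0})ⁿ`. A zero of `f_Δ` on the (open) torus is then a local minimum of `f_Δ`,
hence a common zero of its partial derivatives, which non-degeneracy at infinity forbids.
-/

open Topology

section Face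

variable {n : ℕ} (f : MvPolynomial (Fin n) ℝ) (q : Fin n → ℝ)

lemma isLinearMap_sum_mul : IsLinearMap ℝ (fun y : Fin n → ℝ => ∑ i, q i * y i) where
  map_add y z := by simp only [Pi.add_apply, mul_add, Finset.sum_add_distrib]
  map_smul c y := by
    simp only [Pi.smul_apply, smul_eq_mul, Finset.mul_sum]
    exact Finset.sum_congr rfl fun i _ => by ring

lemma expR_mem_newton {α : Fin n →₀ ℕ} (hα : α ∈ f.support) : expR α ∈ Newton f :=
  subset_convexHull ℝ _ ⟨α, hα, rfl⟩

lemma dMin_eq_min' (hf : f.support.Nonempty) :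
    dMin q f = (f.support.image fun α => ∑ i, q i * expR α i).min' (hf.image _) := by
  set m := (f.support.image fun α => ∑ i, q i * expR α i).min' (hf.image _)
  have hNewton : Newton f ⊆ {y | m ≤ ∑ i, q i * y i} := by
    refine convexHull_min ?_ (convex_halfSpace_ge (isLinearMap_sum_mul q) m)
    rintro _ ⟨α, hα, rfl⟩
    exact Finset.min'_le _ _ (Finset.mem_image_of_mem (fun α => ∑ i, q i * expR α i) hα)
  obtain ⟨α₀, hα₀, hα₀m⟩ := Finset.mem_image.mp
    (Finset.min'_mem (f.support.image fun α => ∑ i, q i * expR α i) (hf.image _))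
  have hm : m ∈ (fun y => ∑ i, q i * y i) '' Newton f := ⟨_, expR_mem_newton f hα₀, hα₀m⟩
  have hbdd : m ∈ lowerBounds ((fun y => ∑ i, q i * y i) '' Newton f) := by
    rintro _ ⟨y, hy, rfl⟩
    exact hNewton hy
  exact le_antisymm (csInf_le ⟨m, hbdd⟩ hm) (le_csInf ⟨m, hm⟩ hbdd)

lemma dMin_le {α : Fin n →₀ ℕ} (hα : α ∈ f.support) : dMin q f ≤ ∑ i, q i * expR α i := by
  rw [dMin_eq_min' f q ⟨α, hα⟩]
  exact Finset.min'_le _ _ (Finset.mem_image_of_mem _ hα)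

lemma expR_mem_face_iff {α : Fin n →₀ ℕ} (hα : α ∈ f.support) :
    expR α ∈ face q f ↔ ∑ i, q i * expR α i = dMin q f := by
  simp [face, expR_mem_newton f hα]

open Classical in
lemma eval_trunc (x : Fin n → ℝ) (Δ : Set (Fin n → ℝ)) :
    eval x (trunc f Δ) =
      ∑ α ∈ f.support, if expR α ∈ Δ then f.coeff α * ∏ i, x i ^ α i else 0 := by
  rw [trunc, map_sum, ← Finset.sum_filter]
  refine Finset.sum_congr (by congr) fun α _ => ?_
  rw [eval_monomial, Finsupp.prod_pow]

lemma prod_mul_rpow_pow (x : Fin n → ℝ) (α : Fin n →₀ ℕ) {s : ℝ} (hs : 0 < s) :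
    ∏ i, (x i * s ^ (-q i)) ^ α i = (∏ i, x i ^ α i) * s ^ (-∑ i, q i * expR α i) := by
  simp only [mul_pow, Finset.prod_mul_distrib, ← Real.rpow_natCast, ← Real.rpow_mul hs.le]
  rw [← Real.rpow_sum_of_pos hs, ← Finset.sum_neg_distrib]
  simp only [expR, neg_mul]

lemma rpow_mul_eval_weighted (x : Fin n → ℝ) (d : ℝ) {s : ℝ} (hs : 0 < s) :
    s ^ d * eval (fun i => x i * s ^ (-q i)) f =
      ∑ α ∈ f.support, f.coeff α * (∏ i, x i ^ α i) * s ^ (d - ∑ i, q i * expR α i) := by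
  rw [eval_eq', Finset.mul_sum]
  refine Finset.sum_congr rfl fun α _ => ?_
  rw [prod_mul_rpow_pow q x α hs, sub_eq_add_neg, Real.rpow_add hs]
  ring

lemma tendsto_rpow_dMin_mul_eval_weighted (x : Fin n → ℝ) :
    Tendsto (fun s => s ^ dMin q f * eval (fun i => x i * s ^ (-q i)) f) atTop
      (𝓝 (eval x (trunc f (face q f)))) := by
  refine Tendsto.congr' (eventually_gt_atTop 0 |>.mono fun s hs =>
    (rpow_mul_eval_weighted f q x _ hs).symm) ?_
  rw [eval_trunc]
  refine tendsto_finsetSum _ fun α hα => ?_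
  by_cases hface : expR α ∈ face q f
  · simp only [if_pos hface, (expR_mem_face_iff f q hα).mp hface, sub_self, Real.rpow_zero,
      mul_one]
    exact tendsto_const_nhds
  · have hlt : 0 < ∑ i, q i * expR α i - dMin q f := sub_pos.mpr <|
      (dMin_le f q hα).lt_of_ne fun h => hface ((expR_mem_face_iff f q hα).mpr h.symm)
    have h0 := (tendsto_rpow_neg_atTop hlt).const_mul (f.coeff α * ∏ i, x i ^ α i)
    simpa only [if_neg hface, neg_sub, mul_zero] using h0

end Face

lemma tendsto_norm_weighted_atTop {n : ℕ} {q x : Fin n → ℝ} {j : Fin n} (hqj : q j < 0)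
    (hxj : x j ≠ 0) : Tendsto (fun s : ℝ => ‖fun i => x i * s ^ (-q i)‖) atTop atTop := by
  refine tendsto_atTop_mono' _ ?_
    ((tendsto_rpow_atTop (neg_pos.2 hqj)).const_mul_atTop (abs_pos.2 hxj))
  filter_upwards [eventually_gt_atTop 0] with s hs
  calc |x j| * s ^ (-q j) = ‖x j * s ^ (-q j)‖ := by
        rw [Real.norm_eq_abs, abs_mul, abs_of_pos (Real.rpow_pos_of_pos hs _)]
    _ ≤ _ := norm_le_pi_norm (fun i => x i * s ^ (-q i)) j

lemma eval_trunc_face_nonneg {n : ℕ} {f : MvPolynomial (Fin n) ℝ} {R : ℝ}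
    (hpos : ∀ x : Fin n → ℝ, R < ‖x‖ → 0 ≤ eval x f) {q x : Fin n → ℝ} {j : Fin n}
    (hqj : q j < 0) (hxj : x j ≠ 0) : 0 ≤ eval x (trunc f (face q f)) := by
  refine ge_of_tendsto (tendsto_rpow_dMin_mul_eval_weighted f q x) ?_
  filter_upwards [eventually_gt_atTop 0,
    (tendsto_norm_weighted_atTop hqj hxj).eventually_gt_atTop R] with s hs hsR
  exact mul_nonneg (Real.rpow_nonneg hs.le _) (hpos _ hsR)

lemma hasDerivAt_eval_update {n : ℕ} (p : MvPolynomial (Fin n) ℝ) (i : Fin n)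
    (x : Fin n → ℝ) (t : ℝ) :
    HasDerivAt (fun s => eval (Function.update x i s) p)
      (eval (Function.update x i t) (pderiv i p)) t := by
  induction p using MvPolynomial.induction_on with
  | C a => simpa [pderiv_C] using hasDerivAt_const t a
  | add p q hp hq => simpa using hp.fun_add hq
  | mul_X p j hp =>
    rcases eq_or_ne j i with rfl | hne
    · simpa [pderiv_mul, pderiv_X_self, Function.update_self, mul_comm, mul_add, add_comm]
        using hp.fun_mul (hasDerivAt_id' t)
    · have := hp.mul_const (x j)
      simp only [map_mul, eval_X, Function.update_apply, if_neg hne] at *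
      simpa [pderiv_mul, pderiv_X_of_ne hne, Function.update_apply, if_neg hne, mul_comm]
        using this

lemma IsLocalMin.eval_pderiv_eq_zero {n : ℕ} {p : MvPolynomial (Fin n) ℝ} {x : Fin n → ℝ}
    (h : IsLocalMin (fun y => eval y p) x) (i : Fin n) : eval x (pderiv i p) = 0 := by
  have hD := hasDerivAt_eval_update p i x (x i)
  rw [Function.update_eq_self] at hD
  have hmin : IsLocalMin (fun t => eval (Function.update x i t) p) (x i) := by
    refine IsLocalMin.comp_continuous (f := fun y => eval y p) (g := Function.update x i) ?_
      (continuous_const.update i continuous_id).continuousAt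
    rwa [Function.update_eq_self]
  exact hmin.hasDerivAt_eq_zero hD

theorem stmt10_general {n : ℕ} (f : MvPolynomial (Fin n) ℝ)
    (hnd : Nondeg f) (R : ℝ)
    (hpos : ∀ x : Fin n → ℝ, R < ‖x‖ → 0 ≤ eval x f) :
    ∀ Δ ∈ NewtonBoundary f, ∀ x : Fin n → ℝ, (∀ i, x i ≠ 0) → 0 < eval x (trunc f Δ) := by
  rintro Δ ⟨q, ⟨j, hqj⟩, rfl⟩ x hx
  have hnonneg : ∀ y : Fin n → ℝ, (∀ i, y i ≠ 0) → 0 ≤ eval y (trunc f (face q f)) :=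
    fun y hy => eval_trunc_face_nonneg hpos hqj (hy j)
  refine (hnonneg x hx).lt_of_ne fun hzero => hnd _ ⟨q, ⟨j, hqj⟩, rfl⟩
    ⟨x, hx, hzero.symm, fun i => IsLocalMin.eval_pderiv_eq_zero ?_ i⟩
  have htorus : univ.pi (fun _ => {0}ᶜ) ∈ 𝓝 x :=
    (isOpen_set_pi finite_univ fun _ _ => isOpen_compl_singleton).mem_nhds
      (mem_univ_pi.mpr hx)
  filter_upwards [htorus] with y hy
  rw [← hzero]
  exact hnonneg y (mem_univ_pi.mp hy)

theorem stmt10 {n : ℕ} (f : MvPolynomial (Fin n) ℝ) (hf : f.totalDegree ≠ 0)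
    (hnd : Nondeg f) (R : ℝ) (hR : 0 < R)
    (hpos : ∀ x : Fin n → ℝ, R < ‖x‖ → 0 ≤ eval x f) :
    ∀ Δ ∈ NewtonBoundary f, ∀ x : Fin n → ℝ, (∀ i, x i ≠ 0) → 0 < eval x (trunc f Δ) :=
  stmt10_general f hnd R hpos
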